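/- Let G be a layered path graph with layers G₁, ..., G_m satisfying condition (*): for every intra-layer edge (v, v'), #(N↓(v) \ N↓(v')) ≤ 1. If every node v ∈ V(G) \ V(G₁) satisfies d↓(v) ≥ 1, then λ₂(L_G) = 1. -/

import Mathlib

noncomputable def lap {V : Type*} [Fintype V] [DecidableEq V] (w : V → V → ℝ) :
    Matrix V V ℝ :=
  Matrix.of fun i j => if i = j then (∑ k, w k i) - w i i else - w j i

/-- The `j`-th smallest (0-indexed) real part among the eigenvalues of `M`;
`lamRe M 1` is Re(λ₂). -/
noncomputable def lamRe {ι : Type*} [Fintype ι] [DecidableEq ι] (M : Matrix ι ι ℝ)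
    (j : ℕ) : ℝ :=
  (((M.map (fun x : ℝ => (x : ℂ))).charpoly.roots.map Complex.re).sort (· ≤ ·)).getD j 0

/-- Weight 1 on each edge of the digraph with edge relation `E`. -/
noncomputable def edgeW {V : Type*} (E : V → V → Prop) : V → V → ℝ :=
  fun u v => @ite ℝ (E u v) (Classical.propDecidable _) 1 0

/-- The set of in-neighbors of `v` lying in the preceding layer. -/
def Ndown {V : Type*} {m : ℕ} (layer : V → Fin m) (E : V → V → Prop) (v : V) : Set V :=
  {u | E u v ∧ (layer u).1 + 1 = (layer v).1}

/-- The from-above degree `d↓(v)`. -/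
noncomputable def ddown {V : Type*} {m : ℕ} (layer : V → Fin m) (E : V → V → Prop)
    (v : V) : ℕ :=
  (Ndown layer E v).ncard

/-- The undirected graph formed by the intra-layer edges. -/
def intraG {V : Type*} {m : ℕ} (layer : V → Fin m) (E : V → V → Prop) :
    SimpleGraph V where
  Adj u v := u ≠ v ∧ layer u = layer v ∧ E u v ∧ E v u
  symm := by refine ⟨?_⟩; rintro u v ⟨h1, h2, h3, h4⟩; exact ⟨h1.symm, h2.symm, h4, h3⟩
  loopless := by refine ⟨?_⟩; rintro v ⟨h1, -⟩; exact h1 rfl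

/-- An undirected graph is a disjoint union of (possibly trivial) path graphs iff it
is acyclic and every vertex has at most two neighbors. -/
def IsPathsUnion {V : Type*} (G : SimpleGraph V) : Prop :=
  G.IsAcyclic ∧ ∀ v, (G.neighborSet v).ncard ≤ 2

open Polynomial Matrix

section helpers

theorem my_eval_charpoly {n R : Type*} [Fintype n] [DecidableEq n] [CommRing R]
    (M : Matrix n n R) (r : R) :
    M.charpoly.eval r = (r • (1 : Matrix n n R) - M).det := by
  rw [Matrix.charpoly, eval_det, Matrix.matPolyEquiv_charmatrix]
  simp [Polynomial.eval_sub, Matrix.scalar_apply, Matrix.smul_one_eq_diagonal]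

theorem roots_re_ge_one {n : Type*} [Fintype n] [DecidableEq n] (B : Matrix n n ℝ)
    (hq : ∀ y : n → ℝ, ∑ i, y i ^ 2 ≤ y ⬝ᵥ B *ᵥ y) :
    ∀ μ ∈ ((B.map (fun x : ℝ => (x : ℂ))).charpoly).roots, 1 ≤ μ.re := by
  intro μ hμ
  set A : Matrix n n ℂ := B.map (fun x : ℝ => (x : ℂ)) with hA
  have hroot : A.charpoly.IsRoot μ := (Polynomial.mem_roots (A.charpoly_monic.ne_zero)).1 hμ
  have hdet : (μ • (1 : Matrix n n ℂ) - A).det = 0 := by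
    rw [← my_eval_charpoly]; exact hroot
  obtain ⟨x, hx0, hxe⟩ := (Matrix.exists_mulVec_eq_zero_iff).2 hdet
  have hAx : A *ᵥ x = μ • x := by
    have := congrArg (fun w => A *ᵥ x + w) hxe
    simp [Matrix.sub_mulVec, Matrix.smul_mulVec, Matrix.one_mulVec] at this
    linear_combination (norm := module) this.symm
  set a : n → ℝ := fun i => (x i).re with ha
  set c : n → ℝ := fun i => (x i).im with hc
  have hS : (0:ℝ) < ∑ i, (a i ^ 2 + c i ^ 2) := by
    have hne : ∃ i, x i ≠ 0 := by
      by_contra h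
      push_neg at h
      exact hx0 (funext fun i => h i)
    obtain ⟨i, hi⟩ := hne
    have : 0 < a i ^ 2 + c i ^ 2 := by
      have := Complex.normSq_pos.2 hi
      simpa [Complex.normSq_apply, ha, hc, pow_two] using this
    refine Finset.sum_pos' (fun j _ => by positivity) ⟨i, Finset.mem_univ i, this⟩
  have key : μ.re * ∑ i, (a i ^ 2 + c i ^ 2) = a ⬝ᵥ B *ᵥ a + c ⬝ᵥ B *ᵥ c := by
    have h1 : star x ⬝ᵥ (A *ᵥ x) = μ * ∑ i, ((a i ^ 2 + c i ^ 2 : ℝ) : ℂ) := by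
      rw [hAx, dotProduct_smul]
      rw [show star x ⬝ᵥ x = ∑ i, ((a i ^2 + c i ^2 : ℝ) : ℂ) from ?_]
      · simp [smul_eq_mul]
      · simp only [dotProduct, Pi.star_apply, RCLike.star_def]
        refine Finset.sum_congr rfl fun i _ => ?_
        simp only [ha, hc, Complex.ext_iff, Complex.mul_re, Complex.mul_im, pow_two,
          Complex.ofReal_re, Complex.ofReal_im, Complex.add_re, Complex.add_im,
          Complex.neg_re, Complex.neg_im, Complex.ofReal_add, Complex.conj_re, Complex.conj_im]
        constructor <;> ring
    have h2 : (star x ⬝ᵥ (A *ᵥ x)).re = a ⬝ᵥ B *ᵥ a + c ⬝ᵥ B *ᵥ c := by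
      simp only [dotProduct, Matrix.mulVec, Complex.re_sum, Pi.star_apply]
      rw [← Finset.sum_add_distrib]
      refine Finset.sum_congr rfl fun i _ => ?_
      simp only [dotProduct, hA, Matrix.map_apply, Finset.mul_sum, Complex.re_sum]
      rw [← Finset.sum_add_distrib]
      refine Finset.sum_congr rfl fun j _ => ?_
      simp only [Complex.mul_re, Complex.mul_im, ha, hc, Complex.ofReal_re, Complex.ofReal_im,
        Pi.star_apply, RCLike.star_def, Complex.conj_re, Complex.conj_im]
      ring
    have h3 := congrArg Complex.re h1
    rw [h2] at h3
    rw [h3, show (∑ i, ((a i ^ 2 + c i ^ 2 : ℝ) : ℂ)) = ((∑ i, (a i ^ 2 + c i ^ 2) : ℝ) : ℂ) by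
      push_cast; ring]
    simp [Complex.mul_re, ← Complex.ofReal_pow]
  have hbound : ∑ i, (a i ^ 2 + c i ^ 2) ≤ a ⬝ᵥ B *ᵥ a + c ⬝ᵥ B *ᵥ c := by
    rw [Finset.sum_add_distrib]
    exact add_le_add (hq a) (hq c)
  nlinarith [hS, key, hbound]

theorem charpoly_unique_zero {n : Type*} [Fintype n] [DecidableEq n] [Unique n]
    (M : Matrix n n ℂ) (h : M default default = 0) : M.charpoly = X := by
  rw [Matrix.charpoly, Matrix.det_unique, Matrix.charmatrix_apply_eq, h]
  simp

theorem one_mem_roots_lap_add_one {n : Type*} [Fintype n] [DecidableEq n] [Nonempty n]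
    (G : SimpleGraph n) [DecidableRel G.Adj] :
    (1 : ℂ) ∈ (((G.lapMatrix ℝ + 1).map (fun x : ℝ => (x : ℂ))).charpoly).roots := by
  set M : Matrix n n ℝ := G.lapMatrix ℝ + 1
  have hdetlap : (G.lapMatrix ℝ).det = 0 := by
    rw [← Matrix.exists_mulVec_eq_zero_iff]
    refine ⟨fun _ => 1, ?_, G.lapMatrix_mulVec_const_eq_zero⟩
    intro h
    exact one_ne_zero (congrFun h (Classical.arbitrary n))
  have hmap : M.map (fun x : ℝ => (x : ℂ)) = M.map Complex.ofRealHom := rfl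
  rw [Polynomial.mem_roots (Matrix.charpoly_monic _).ne_zero]
  show Polynomial.eval _ _ = 0
  rw [my_eval_charpoly, hmap]
  have h1 : (1:ℂ) • (1 : Matrix n n ℂ) = (1 : Matrix n n ℝ).map Complex.ofRealHom := by
    simp [Matrix.map_one]
  rw [h1, ← Matrix.map_sub _ (fun a b => by simp)]
  rw [← RingHom.mapMatrix_apply, ← RingHom.map_det]
  have : (1 : Matrix n n ℝ) - M = -(G.lapMatrix ℝ) := by
    simp [M]
  rw [this, Matrix.det_neg, hdetlap]
  simp

theorem sort_getD_one (S : Multiset ℝ) (hS : ∀ y ∈ S, 1 ≤ y) (h1 : 1 ∈ S) :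
    (((0 ::ₘ S)).sort (· ≤ ·)).getD 1 0 = 1 := by
  set l := ((0 ::ₘ S)).sort (· ≤ ·) with hl
  have hsorted : l.Pairwise (· ≤ ·) := (0 ::ₘ S).pairwise_sort _
  have hperm : (l : Multiset ℝ) = 0 ::ₘ S := (0 ::ₘ S).sort_eq _
  have hlen : l.length = Multiset.card S + 1 := by
    have := congrArg Multiset.card hperm
    simpa using this
  have hScard : 0 < Multiset.card S := Multiset.card_pos_iff_exists_mem.2 ⟨1, h1⟩
  clear_value l
  match l, hsorted, hperm, hlen with
  | [], _, hperm, hlen => exfalso; simp at hlen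
  | [x], _, hperm, hlen =>
      exfalso; simp only [List.length_cons, List.length_nil] at hlen; omega
  | x :: y :: rest, hsorted, hperm, hlen => ?_
  have hmem : ∀ z : ℝ, z ∈ x :: y :: rest ↔ z ∈ (0 ::ₘ S) := by
    intro z
    rw [← hperm]
    simp
  obtain ⟨hx_le, hy_le_rest, _⟩ :
      (∀ b ∈ y :: rest, x ≤ b) ∧ (∀ b ∈ rest, y ≤ b) ∧ rest.Pairwise (· ≤ ·) := by
    rw [List.pairwise_cons] at hsorted
    exact ⟨hsorted.1, (List.pairwise_cons.1 hsorted.2).1, (List.pairwise_cons.1 hsorted.2).2⟩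
  have hxy : x ≤ y := hx_le y (by simp)
  have hnonneg : ∀ z : ℝ, z ∈ x :: y :: rest → 0 ≤ z := by
    intro z hz
    rcases Multiset.mem_cons.1 ((hmem z).1 hz) with h | h
    · exact le_of_eq h.symm
    · linarith [hS z h]
  have hx0 : x = 0 := by
    have h0mem : (0:ℝ) ∈ x :: y :: rest := (hmem 0).2 (Multiset.mem_cons_self _ _)
    have hxle : x ≤ 0 := by
      rcases List.mem_cons.1 h0mem with h | h
      · exact h.symm.le
      · exact hx_le 0 h
    exact le_antisymm hxle (hnonneg x (by simp))
  have h1mem : (1:ℝ) ∈ x :: y :: rest := (hmem 1).2 (Multiset.mem_cons_of_mem h1)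
  have hyle : y ≤ 1 := by
    rcases List.mem_cons.1 h1mem with h | h
    · exfalso; rw [hx0] at h; norm_num at h
    · rcases List.mem_cons.1 h with h | h
      · exact h.symm.le
      · exact hy_le_rest 1 h
  have hcount : (x :: y :: rest).countP (fun z => decide (z < 1)) =
      Multiset.countP (fun z : ℝ => z < 1) (0 ::ₘ S) := by
    rw [← hperm, Multiset.coe_countP]
  have hcountS : Multiset.countP (fun z : ℝ => z < 1) S = 0 := by
    rw [Multiset.countP_eq_zero]
    intro z hz
    simpa using not_lt.2 (hS z hz)
  have hyge : 1 ≤ y := by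
    by_contra hy
    push_neg at hy
    have hxlt : x < 1 := by rw [hx0]; norm_num
    have h2 : 2 ≤ (x :: y :: rest).countP (fun z => decide (z < 1)) := by
      rw [List.countP_cons, List.countP_cons]
      simp [hxlt, hy]
    rw [hcount, Multiset.countP_cons, hcountS] at h2
    simp at h2
  have : y = 1 := le_antisymm hyle hyge
  simpa using this

end helpers

/-- For a layered path graph satisfying condition (*), if every node outside the first
layer has at least one neighbor in the layer above, then λ₂(L_G) = 1. -/
theorem stmt_13 {V : Type*} [Fintype V] [DecidableEq V] (m : ℕ) (hm2 : 2 ≤ m)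
    (hm : 0 < m)
    (layer : V → Fin m) (E : V → V → Prop)
    (hsurj : Function.Surjective layer)
    (hirr : ∀ v, ¬ E v v)
    (hlayered : ∀ u v, E u v → layer u = layer v ∨ (layer u).1 + 1 = (layer v).1)
    (htop : ∃! v, layer v = ⟨0, hm⟩)
    (hundir : ∀ u v, layer u = layer v → (E u v ↔ E v u))
    (hpaths : IsPathsUnion (intraG layer E))
    (hstar : ∀ u v, layer u = layer v → E u v →
      (Ndown layer E u \ Ndown layer E v).ncard ≤ 1)
    (hdeg : ∀ v, layer v ≠ ⟨0, hm⟩ → 1 ≤ ddown layer E v) :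
    lamRe (lap (edgeW E)) 1 = 1 := by
  classical
  set L : Matrix V V ℝ := lap (edgeW E) with hLdef
  set b : V → (Fin m)ᵒᵈ := fun v => OrderDual.toDual (layer v) with hbdef
  have hbsurj : Function.Surjective b := fun a => hsurj (OrderDual.ofDual a)
  -- edgeW basics
  have hedge_zero : ∀ u v, ¬ E u v → edgeW E u v = 0 := by
    intro u v h; simp [edgeW, h]
  have hedge_one : ∀ u v, E u v → edgeW E u v = 1 := by
    intro u v h; simp [edgeW, h]
  -- L is block triangular
  have hbt : L.BlockTriangular b := by
    intro i j hij
    have hne : i ≠ j := by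
      rintro rfl; exact lt_irrefl _ hij
    have hlt : layer i < layer j := hij
    have : ¬ E j i := by
      intro hE
      rcases hlayered j i hE with h | h
      · rw [h] at hlt; exact lt_irrefl _ hlt
      · have : (layer i).1 < (layer j).1 := hlt
        omega
    simp [hLdef, lap, hne, hedge_zero _ _ this]
  set Lc : Matrix V V ℂ := L.map (fun x : ℝ => (x : ℂ)) with hLc
  have hbtc : Lc.BlockTriangular b := by
    intro i j hij
    simp [hLc, Matrix.map_apply, hbt hij]
  -- blocks
  set q : (Fin m)ᵒᵈ → ℂ[X] := fun a => (Lc.toSquareBlock b a).charpoly with hq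
  have hmapblock : ∀ a, Lc.toSquareBlock b a
      = (L.toSquareBlock b a).map (fun x : ℝ => (x : ℂ)) := by
    intro a; rfl
  have hcp : Lc.charpoly = ∏ a : (Fin m)ᵒᵈ, q a := by
    rw [hbtc.charpoly, Finset.image_univ_of_surjective hbsurj]
  obtain ⟨t, htt, htuniq⟩ := htop
  set a₀ : (Fin m)ᵒᵈ := OrderDual.toDual ⟨0, hm⟩ with ha₀def
  have hba : ∀ (v : V) (a : (Fin m)ᵒᵈ), b v = a ↔ layer v = OrderDual.ofDual a := by
    intro v a; constructor <;> exact fun h => h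
  -- the intra-layer graphs on the blocks
  have hlayer_eq : ∀ (a : (Fin m)ᵒᵈ) (i j : {v // b v = a}), layer ↑i = layer ↑j := by
    intro a i j
    have hi := (hba _ _).1 i.2
    have hj := (hba _ _).1 j.2
    rw [hi, hj]
  set Gb : ∀ a : (Fin m)ᵒᵈ, SimpleGraph {i // b i = a} :=
    fun a => (intraG layer E).comap Subtype.val with hGbdef
  have instGb : ∀ a, DecidableRel (Gb a).Adj := fun a => Classical.decRel _
  -- adjacency characterization
  have hadj : ∀ (a : (Fin m)ᵒᵈ) (i j : {v // b v = a}),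
      (Gb a).Adj i j ↔ E ↑j ↑i := by
    intro a i j
    constructor
    · rintro ⟨-, -, -, h4⟩
      exact h4
    · intro hE
      have hl : layer ↑j = layer ↑i := hlayer_eq a j i
      refine ⟨?_, (hlayer_eq a i j), (hundir _ _ hl).1 hE, hE⟩
      intro hij
      exact hirr ↑i (by rw [hij] at hE ⊢; exact hE)
  -- the diagonal entries decomposition
  have hdiag : ∀ (a : (Fin m)ᵒᵈ) (i : {v // b v = a}),
      (∑ k, edgeW E k ↑i) =
        ((Gb a).degree i : ℝ) + (ddown layer E ↑i : ℝ) := by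
    intro a i
    letI := instGb a
    set v : V := ↑i with hv
    have hsplit : ∀ k, edgeW E k v =
        (if (E k v ∧ layer k = layer v) then (1:ℝ) else 0) +
        (if (E k v ∧ (layer k).1 + 1 = (layer v).1) then (1:ℝ) else 0) := by
      intro k
      by_cases hE : E k v
      · rcases hlayered k v hE with h | h
        · have h2 : ¬ ((layer k).1 + 1 = (layer v).1) := by rw [h]; omega
          rw [hedge_one _ _ hE, if_pos ⟨hE, h⟩, if_neg (fun hc => h2 hc.2)]
          norm_num
        · have h2 : ¬ (layer k = layer v) := by
            intro hc; rw [hc] at h; omega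
          rw [hedge_one _ _ hE, if_neg (fun hc => h2 hc.2), if_pos ⟨hE, h⟩]
          norm_num
      · rw [hedge_zero _ _ hE, if_neg (fun hc => hE hc.1), if_neg (fun hc => hE hc.1)]
        norm_num
    rw [Finset.sum_congr rfl (fun k _ => hsplit k), Finset.sum_add_distrib]
    congr 1
    · -- intra part equals the degree
      rw [SimpleGraph.degree_eq_sum_if_adj (Gb a) i]
      have step1 : (∑ k : V, if (E k v ∧ layer k = layer v) then (1:ℝ) else 0)
          = ∑ k ∈ Finset.univ.filter (fun k => b k = a),
              (if (E k v ∧ layer k = layer v) then (1:ℝ) else 0) := by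
        refine (Finset.sum_subset (Finset.subset_univ _) ?_).symm
        intro k _ hk
        rw [Finset.mem_filter] at hk
        push_neg at hk
        have hbk : b k ≠ a := hk (Finset.mem_univ k)
        refine if_neg ?_
        rintro ⟨-, hl⟩
        apply hbk
        rw [hba k a, ← (hba v a).1 i.2, hl]
      rw [step1, Finset.sum_subtype (p := fun k => b k = a)
        (Finset.univ.filter (fun k => b k = a))
        (fun x => by simp) (fun k => if (E k v ∧ layer k = layer v) then (1:ℝ) else 0)]
      refine Finset.sum_congr rfl fun j _ => ?_
      refine if_congr ?_ rfl rfl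
      rw [hadj a i j]
      constructor
      · rintro ⟨h1, -⟩; exact h1
      · intro h; exact ⟨h, hlayer_eq a j i⟩
    · -- down part equals ddown
      have hset : Ndown layer E v =
          ↑(Finset.univ.filter fun u => E u v ∧ (layer u).1 + 1 = (layer v).1) := by
        ext u; simp [Ndown]
      rw [ddown, hset, Set.ncard_coe_finset]
      rw [Finset.sum_boole]
  -- the block decomposition
  have hblock : ∀ a : (Fin m)ᵒᵈ,
      L.toSquareBlock b a =
        (@SimpleGraph.lapMatrix _ ℝ _ (Gb a) (instGb a) _ _) +
          Matrix.diagonal (fun i : {v // b v = a} => (ddown layer E ↑i : ℝ)) := by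
    intro a
    letI := instGb a
    ext i j
    by_cases hij : i = j
    · subst hij
      have hLHS : L.toSquareBlock b a i i = (∑ k, edgeW E k ↑i) - edgeW E ↑i ↑i := by
        simp [Matrix.toSquareBlock_def, hLdef, lap]
      rw [hLHS, hedge_zero _ _ (hirr ↑i), sub_zero, hdiag a i]
      simp [SimpleGraph.lapMatrix, SimpleGraph.degMatrix, Matrix.diagonal_apply_eq,
        Matrix.add_apply, Matrix.sub_apply]
    · have hvne : (↑i : V) ≠ ↑j := fun h => hij (Subtype.ext h)
      have hLHS : L.toSquareBlock b a i j = - edgeW E ↑j ↑i := by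
        simp [Matrix.toSquareBlock_def, hLdef, lap, hvne]
      rw [hLHS]
      have hRHS : ((@SimpleGraph.lapMatrix _ ℝ _ (Gb a) (instGb a) _ _) +
          Matrix.diagonal (fun i : {v // b v = a} => (ddown layer E ↑i : ℝ))) i j
          = - (if (Gb a).Adj i j then (1:ℝ) else 0) := by
        simp [SimpleGraph.lapMatrix, SimpleGraph.degMatrix, Matrix.diagonal_apply_ne _ hij,
          Matrix.add_apply, Matrix.sub_apply, hij]
      rw [hRHS]
      congr 1
      by_cases hE : E ↑j ↑i
      · rw [hedge_one _ _ hE, if_pos ((hadj a i j).2 hE)]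
      · rw [hedge_zero _ _ hE, if_neg (fun hc => hE ((hadj a i j).1 hc))]
  -- quadratic form bound on blocks away from the top layer
  have hquad : ∀ a : (Fin m)ᵒᵈ, a ≠ a₀ → ∀ y : {v // b v = a} → ℝ,
      ∑ i, y i ^ 2 ≤ y ⬝ᵥ (L.toSquareBlock b a) *ᵥ y := by
    intro a ha y
    letI := instGb a
    have hd1 : ∀ i : {v // b v = a}, (1:ℝ) ≤ (ddown layer E ↑i : ℝ) := by
      intro i
      have hlay : layer ↑i ≠ ⟨0, hm⟩ := by
        intro hc
        apply ha
        rw [← i.2, hba, hc]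
        rfl
      exact_mod_cast hdeg ↑i hlay
    rw [hblock a, Matrix.add_mulVec, dotProduct_add]
    have hpsd : 0 ≤ y ⬝ᵥ ((@SimpleGraph.lapMatrix _ ℝ _ (Gb a) (instGb a) _ _) *ᵥ y) := by
      have := (SimpleGraph.posSemidef_lapMatrix ℝ (Gb a)).dotProduct_mulVec_nonneg y
      simpa using this
    have : ∑ i, y i ^ 2 ≤ y ⬝ᵥ (Matrix.diagonal
        (fun i : {v // b v = a} => (ddown layer E ↑i : ℝ)) *ᵥ y) := by
      simp only [dotProduct, Matrix.mulVec_diagonal]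
      refine Finset.sum_le_sum fun i _ => ?_
      nlinarith [hd1 i, sq_nonneg (y i)]
    linarith
  -- the top block has charpoly X
  haveI huniq : Unique {v // b v = a₀} :=
    { default := ⟨t, by rw [hba]; exact htt⟩
      uniq := fun x => Subtype.ext (htuniq _ ((hba _ _).1 x.2)) }
  have hq0 : q a₀ = X := by
    rw [hq]
    apply charpoly_unique_zero
    have hdd : ((Lc.toSquareBlock b a₀) default default : ℂ)
        = ((L t t : ℝ) : ℂ) := by
      have hdt : ((default : {v // b v = a₀}) : V) = t :=
        htuniq _ ((hba _ _).1 (default : {v // b v = a₀}).2)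
      simp [Matrix.toSquareBlock_def, hLc, Matrix.map_apply, hdt]
    rw [hdd]
    have hLtt : L t t = 0 := by
      have hnoE : ∀ k, ¬ E k t := by
        intro k hE
        rcases hlayered k t hE with h | h
        · have : k = t := htuniq k (by show layer k = ⟨0, hm⟩; rw [h, htt])
          rw [this] at hE
          exact hirr t hE
        · rw [htt] at h
          simp at h
      have : ∀ k, edgeW E k t = 0 := fun k => hedge_zero _ _ (hnoE k)
      simp [hLdef, lap, this]
    rw [hLtt]
    simp
  -- the layer-1 block has 1 as a root
  have hm1 : (1 : ℕ) < m := by omega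
  set a₁ : (Fin m)ᵒᵈ := OrderDual.toDual ⟨1, hm1⟩ with ha₁def
  have ha₁ne : a₁ ≠ a₀ := by
    intro hc
    have : (⟨1, hm1⟩ : Fin m) = ⟨0, hm⟩ := OrderDual.toDual.injective hc
    simp [Fin.ext_iff] at this
  haveI hne1 : Nonempty {v // b v = a₁} := by
    obtain ⟨v, hv⟩ := hbsurj a₁
    exact ⟨⟨v, hv⟩⟩
  have hone : (1 : ℂ) ∈ (q a₁).roots := by
    have hdd1 : ∀ i : {v // b v = a₁}, (ddown layer E ↑i : ℝ) = 1 := by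
      intro i
      have hlay : layer ↑i = ⟨1, hm1⟩ := (hba _ _).1 i.2
      have hsub : Ndown layer E ↑i ⊆ {t} := by
        intro u hu
        have h2 : (layer u).1 + 1 = (layer ↑i).1 := hu.2
        rw [hlay] at h2
        have : layer u = ⟨0, hm⟩ := by
          apply Fin.ext
          simpa using h2
        simp [htuniq u this]
      have hle : ddown layer E ↑i ≤ 1 := by
        have := Set.ncard_le_ncard hsub (Set.finite_singleton t)
        rw [Set.ncard_singleton] at this; exact this
      have hge : 1 ≤ ddown layer E ↑i := by
        apply hdeg
        rw [hlay]
        simp [Fin.ext_iff]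
      have : ddown layer E ↑i = 1 := le_antisymm hle hge
      rw [this]
      norm_num
    have hblk1 : L.toSquareBlock b a₁ =
        (@SimpleGraph.lapMatrix _ ℝ _ (Gb a₁) (instGb a₁) _ _) + 1 := by
      rw [hblock a₁]
      congr 1
      rw [show (fun i : {v // b v = a₁} => (ddown layer E ↑i : ℝ)) = fun _ => 1 from
        funext fun i => hdd1 i]
      exact Matrix.diagonal_one
    show (1:ℂ) ∈ ((Lc.toSquareBlock b a₁).charpoly).roots
    rw [hmapblock a₁, hblk1]
    letI := instGb a₁
    exact one_mem_roots_lap_add_one (Gb a₁)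
  -- assemble the roots multiset
  have hqmonic : ∀ a : (Fin m)ᵒᵈ, (q a).Monic := fun a => Matrix.charpoly_monic _
  have hP0 : (∏ a ∈ Finset.univ.erase a₀, q a) ≠ 0 :=
    Finset.prod_ne_zero_iff.2 fun a _ => (hqmonic a).ne_zero
  have hprodsplit : Lc.charpoly = q a₀ * ∏ a ∈ Finset.univ.erase a₀, q a := by
    rw [hcp, ← Finset.mul_prod_erase _ _ (Finset.mem_univ a₀)]
  have hroots : Lc.charpoly.roots =
      (0 : ℂ) ::ₘ (Finset.univ.erase a₀).val.bind (fun a => (q a).roots) := by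
    rw [hprodsplit, Polynomial.roots_mul (mul_ne_zero (hqmonic a₀).ne_zero hP0), hq0,
      Polynomial.roots_X, Polynomial.roots_prod _ _ hP0, Multiset.singleton_add]
  set S : Multiset ℝ :=
    ((Finset.univ.erase a₀).val.bind (fun a => (q a).roots)).map Complex.re with hSdef
  have hT : Lc.charpoly.roots.map Complex.re = 0 ::ₘ S := by
    rw [hroots, Multiset.map_cons, Complex.zero_re]
  have hSge : ∀ y ∈ S, 1 ≤ y := by
    intro y hy
    obtain ⟨μ, hμ, rfl⟩ := Multiset.mem_map.1 hy
    obtain ⟨a, hamem, hμa⟩ := Multiset.mem_bind.1 hμ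
    have hane : a ≠ a₀ := (Finset.mem_erase.1 (Finset.mem_def.2 hamem)).1
    refine roots_re_ge_one (L.toSquareBlock b a) (hquad a hane) μ ?_
    rw [← hmapblock a]
    exact hμa
  have h1S : (1:ℝ) ∈ S := by
    refine Multiset.mem_map.2 ⟨1, Multiset.mem_bind.2 ⟨a₁, ?_, hone⟩, Complex.one_re⟩
    exact Finset.mem_erase.2 ⟨ha₁ne, Finset.mem_univ a₁⟩
  show ((Lc.charpoly.roots.map Complex.re).sort (· ≤ ·)).getD 1 0 = 1
  rw [hT]
  exact sort_getD_one S hSge h1S
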